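/- arXiv:1206.3090 — 4 statements merged into one kernel-verified Lean document; each statement's English description precedes it below -/
import Mathlib

section
/- Let K be a field, let I_1,…,I_m be ideals of K[x_1,…,x_n], let μ_1,…,μ_m be positive integers, set N = μ_1·μ_2·⋯·μ_m, and let a ∈ K^n. Then the ideal I_1^{N/μ_1} + I_2^{N/μ_2} + … + I_m^{N/μ_m} is contained in m_a^N if and only if I_j ⊆ m_a^{μ_j} for every j = 1,…,m. In other words, supp((I_1,μ_1)+…+(I_m,μ_m)) = supp(I_1,μ_1) ∩ … ∩ supp(I_m,μ_m). -/
/-!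
Translating by `a` carries `m_a` to the ideal of the variables, and a polynomial lies in the
`μ`-th power of that ideal iff its order, as a power series, is at least `μ`. Over a field the
order is additive, so `f ^ k ∈ m_a ^ (k * μ)` with `k > 0` forces `f ∈ m_a ^ μ`; applied with
`k = N / μ_j` this turns `I_j ^ (N / μ_j) ⊆ m_a ^ N` into `I_j ⊆ m_a ^ μ_j`. The converse is
`(m_a ^ μ_j) ^ (N / μ_j) = m_a ^ N`.
-/

/-- The maximal ideal of `K[x_i : i ∈ σ]` at the point `a`. -/
noncomputable def maxIdeal (K : Type*) [Field K] (σ : Type*) (a : σ → K) :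
    Ideal (MvPolynomial σ K) :=
  Ideal.span (Set.range fun i => MvPolynomial.X i - MvPolynomial.C (a i))

namespace MvPowerSeries

theorem order_pow {σ R : Type*} [CommSemiring R] [NoZeroDivisors R] [Nontrivial R]
    (f : MvPowerSeries σ R) (k : ℕ) : (f ^ k).order = k • f.order := by
  simpa using order_prod (fun _ => f) (Finset.range k)

end MvPowerSeries

namespace MvPolynomial

variable {σ R : Type*}

theorem mem_pow_idealOfVars_iff_le_order [CommSemiring R] (n : ℕ) (p : MvPolynomial σ R) :
    p ∈ idealOfVars σ R ^ n ↔ (n : ℕ∞) ≤ (p : MvPowerSeries σ R).order := by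
  rw [mem_pow_idealOfVars_iff']
  refine ⟨fun h => MvPowerSeries.nat_le_order fun d hd => ?_, fun h d hd => ?_⟩
  · rw [coeff_coe]
    exact h d hd
  · rw [← coeff_coe]
    exact MvPowerSeries.coeff_of_lt_order ((Nat.cast_lt.mpr hd).trans_le h)

theorem mem_pow_idealOfVars_of_pow_mem [CommRing R] [IsDomain R] {p : MvPolynomial σ R}
    {k μ : ℕ} (hk : k ≠ 0) (h : p ^ k ∈ idealOfVars σ R ^ (k * μ)) :
    p ∈ idealOfVars σ R ^ μ := by
  rw [mem_pow_idealOfVars_iff_le_order, coe_pow, MvPowerSeries.order_pow, nsmul_eq_mul,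
    Nat.cast_mul] at h
  rw [mem_pow_idealOfVars_iff_le_order]
  exact (ENat.mul_le_mul_left_iff (Nat.cast_ne_zero.mpr hk) (ENat.natCast_ne_top k)).mp h

noncomputable def translation [CommRing R] (a : σ → R) :
    MvPolynomial σ R ≃ₐ[R] MvPolynomial σ R :=
  AlgEquiv.ofAlgHom (aeval fun i => X i + C (a i)) (aeval fun i => X i - C (a i))
    (by ext i; simp [algebraMap_eq]) (by ext i; simp [algebraMap_eq])

theorem translation_X_sub_C [CommRing R] (a : σ → R) (i : σ) :
    translation a (X i - C (a i)) = X i := by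
  simp [translation, algebraMap_eq]

end MvPolynomial

open MvPolynomial

section maxIdeal

variable {K σ : Type*} [Field K]

theorem map_translation_maxIdeal (a : σ → K) :
    (maxIdeal K σ a).map (translation a) = idealOfVars σ K := by
  rw [maxIdeal, Ideal.map_span, ← Set.range_comp]
  simp only [Function.comp_def, translation_X_sub_C]

theorem mem_maxIdeal_pow_iff (a : σ → K) (n : ℕ) (f : MvPolynomial σ K) :
    f ∈ maxIdeal K σ a ^ n ↔ translation a f ∈ idealOfVars σ K ^ n := by
  rw [← map_translation_maxIdeal a, ← Ideal.map_pow, Ideal.mem_map_of_equiv]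
  simp only [(translation a).injective.eq_iff, exists_eq_right]

theorem mem_maxIdeal_pow_of_pow_mem {a : σ → K} {f : MvPolynomial σ K} {k μ : ℕ} (hk : k ≠ 0)
    (h : f ^ k ∈ maxIdeal K σ a ^ (k * μ)) : f ∈ maxIdeal K σ a ^ μ := by
  rw [mem_maxIdeal_pow_iff, map_pow] at h
  rw [mem_maxIdeal_pow_iff]
  exact mem_pow_idealOfVars_of_pow_mem hk h

end maxIdeal

/-- The support of the sum of marked ideals `(I_1,μ_1)+…+(I_m,μ_m)`, namely of
`(I_1^{N/μ_1}+…+I_m^{N/μ_m}, N)` with `N = μ_1⋯μ_m`, is the intersection of the supports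
of the `(I_j, μ_j)`. -/
theorem supp_sum_markedIdeals (K : Type*) [Field K] (n m : ℕ)
    (I : Fin m → Ideal (MvPolynomial (Fin n) K)) (μ : Fin m → ℕ)
    (hμ : ∀ j, 0 < μ j) (N : ℕ) (hN : N = ∏ j, μ j) (a : Fin n → K) :
    (∑ j, (I j) ^ (N / μ j)) ≤ maxIdeal K (Fin n) a ^ N ↔
      ∀ j, I j ≤ maxIdeal K (Fin n) a ^ (μ j) := by
  have hdvd (j : Fin m) : μ j ∣ N := hN ▸ Finset.dvd_prod_of_mem μ (Finset.mem_univ j)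
  have hN_pos : 0 < N := hN ▸ Finset.prod_pos fun j _ => hμ j
  have hk (j : Fin m) : N / μ j ≠ 0 := (Nat.div_pos (Nat.le_of_dvd hN_pos (hdvd j)) (hμ j)).ne'
  have hpow (j : Fin m) : maxIdeal K (Fin n) a ^ (N / μ j * μ j) = maxIdeal K (Fin n) a ^ N := by
    rw [Nat.div_mul_cancel (hdvd j)]
  simp only [Ideal.sum_eq_sup, Finset.sup_le_iff, Finset.mem_univ, true_implies]
  refine forall_congr' fun j => ⟨fun h f hf => ?_, fun h => ?_⟩
  · refine mem_maxIdeal_pow_of_pow_mem (hk j) ?_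
    rw [hpow]
    exact h (Ideal.pow_mem_pow hf _)
  · calc I j ^ (N / μ j) ≤ (maxIdeal K (Fin n) a ^ μ j) ^ (N / μ j) := Ideal.pow_right_mono h _
      _ = maxIdeal K (Fin n) a ^ N := by rw [← pow_mul, mul_comm, hpow]
end

section
/- Let K be a field and let I ⊆ K[x_1,…,x_n] be the ideal generated by polynomials g_1,…,g_l. Then for every i ≥ 0, the iterated derivative ideal D^i(I) equals the ideal generated by all partial derivatives ∂^α g_j with multi-index |α| ≤ i (including the g_j themselves for α = 0). In particular, D^i(I) admits a generating set of at most (n+1)^i·l polynomials, each of total degree at most max_j deg(g_j). -/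
/-- The derivative ideal `D(I)`: generated by all elements of `I` together with all
their first partial derivatives. -/
noncomputable def derivIdeal {K : Type*} [Field K] {σ : Type*}
    (I : Ideal (MvPolynomial σ K)) : Ideal (MvPolynomial σ K) :=
  Ideal.span ((I : Set (MvPolynomial σ K)) ∪
    {g | ∃ f ∈ I, ∃ j : σ, g = MvPolynomial.pderiv j f})

/-- The iterated derivative ideal `D^i(I)`. -/
noncomputable def derivIdealIter {K : Type*} [Field K] {σ : Type*}
    (i : ℕ) (I : Ideal (MvPolynomial σ K)) : Ideal (MvPolynomial σ K) :=
  derivIdeal^[i] I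

/-!
Since `∂ⱼ(r f) = (∂ⱼ r) f + r ∂ⱼ f`, the derivatives of the elements of `span T` lie in the ideal
generated by `T` and the first derivatives of elements of `T`; so `D (span T)` is generated by `T`
and its first derivatives, and by induction `D^i (span T)` by the derivatives of order `≤ i` of
elements of `T`. A derivative of order `≤ i` is a word of length `≤ i` in the variables, and such
words are exactly the words of length `i` in the variables and a blank letter with the blanks
erased, so there are at most `(n + 1)^i` of them. Partial derivatives do not raise total degree.
-/

open MvPolynomial

namespace List

theorem exists_reduceOption_ofFn_eq {α : Type*} :
    ∀ {m : ℕ} (L : List α), L.length ≤ m → ∃ f : Fin m → Option α, (ofFn f).reduceOption = L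
  | m, [], _ => ⟨fun _ => none, by simp⟩
  | m + 1, a :: L, hL => by
    obtain ⟨f, hf⟩ := exists_reduceOption_ofFn_eq L (by simpa using hL)
    exact ⟨Fin.cons (some a) f, by simp [ofFn_succ, reduceOption_cons_of_some, hf]⟩

end List

namespace MvPolynomial

variable {R σ : Type*} [CommSemiring R]

theorem totalDegree_pderiv_le (f : MvPolynomial σ R) (j : σ) :
    (pderiv j f).totalDegree ≤ f.totalDegree := by
  classical
  conv_lhs => rw [f.as_sum]
  rw [map_sum]
  refine (totalDegree_finsetSum _ _).trans (Finset.sup_le fun m hm => ?_)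
  rw [pderiv_monomial]
  refine (totalDegree_monomial_le _ _).trans (le_trans ?_ (le_totalDegree hm))
  rw [Finsupp.sum_of_support_subset _ Finsupp.support_tsub _ (fun _ _ => rfl), Finsupp.sum]
  exact Finset.sum_le_sum fun x _ => by rw [Finsupp.tsub_apply]; exact tsub_le_self

theorem totalDegree_foldr_pderiv_le (L : List σ) (f : MvPolynomial σ R) :
    (L.foldr (fun t q => pderiv t q) f).totalDegree ≤ f.totalDegree := by
  induction L with
  | nil => exact le_rfl
  | cons t L ih => exact (totalDegree_pderiv_le _ t).trans ih

def pderivsUpTo {ι : Type*} (g : ι → MvPolynomial σ R) (i : ℕ) : Set (MvPolynomial σ R) :=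
  {p | ∃ j, ∃ L : List σ, L.length ≤ i ∧ p = L.foldr (fun t q => pderiv t q) (g j)}

variable {ι : Type*} (g : ι → MvPolynomial σ R)

theorem pderivsUpTo_zero : pderivsUpTo g 0 = Set.range g := by
  ext p
  constructor
  · rintro ⟨j, L, hL, rfl⟩
    rw [List.length_eq_zero_iff.mp (Nat.le_zero.mp hL)]
    exact ⟨j, rfl⟩
  · rintro ⟨j, rfl⟩
    exact ⟨j, [], le_rfl, rfl⟩

theorem pderivsUpTo_succ (i : ℕ) :
    pderivsUpTo g (i + 1) =
      pderivsUpTo g i ∪ {p | ∃ f ∈ pderivsUpTo g i, ∃ t, p = pderiv t f} := by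
  ext p
  constructor
  · rintro ⟨j, _ | ⟨t, L⟩, hL, rfl⟩
    · exact Or.inl ⟨j, [], Nat.zero_le i, rfl⟩
    · exact Or.inr ⟨_, ⟨j, L, by simpa using hL, rfl⟩, t, rfl⟩
  · rintro (⟨j, L, hL, rfl⟩ | ⟨_, ⟨j, L, hL, rfl⟩, t, rfl⟩)
    · exact ⟨j, L, hL.trans i.le_succ, rfl⟩
    · exact ⟨j, t :: L, by simpa using hL, rfl⟩

theorem pderivsUpTo_eq_range (i : ℕ) :
    pderivsUpTo g i = Set.range fun p : ι × (Fin i → Option σ) =>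
      (List.ofFn p.2).reduceOption.foldr (fun t q => pderiv t q) (g p.1) := by
  ext p
  constructor
  · rintro ⟨j, L, hL, rfl⟩
    obtain ⟨f, hf⟩ := List.exists_reduceOption_ofFn_eq L hL
    exact ⟨(j, f), by simp only [hf]⟩
  · rintro ⟨⟨j, f⟩, rfl⟩
    refine ⟨j, _, ?_, rfl⟩
    simpa using List.reduceOption_length_le (List.ofFn f)

end MvPolynomial

section DerivIdeal

variable {K σ : Type*} [Field K]

theorem derivIdeal_span (T : Set (MvPolynomial σ K)) :
    derivIdeal (Ideal.span T) =
      Ideal.span (T ∪ {g | ∃ f ∈ T, ∃ j : σ, g = pderiv j f}) := by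
  set S := T ∪ {g | ∃ f ∈ T, ∃ j : σ, g = pderiv j f}
  have hT : Ideal.span T ≤ Ideal.span S := Ideal.span_mono Set.subset_union_left
  have pderiv_mem : ∀ x ∈ Ideal.span T, ∀ j : σ, pderiv j x ∈ Ideal.span S := by
    intro x hx
    induction hx using Submodule.span_induction with
    | mem t ht => exact fun j => Ideal.subset_span (Or.inr ⟨t, ht, j, rfl⟩)
    | zero => simp
    | add a b _ _ ha hb => exact fun j => by rw [map_add]; exact Ideal.add_mem _ (ha j) (hb j)
    | smul r x hx hder =>
      intro j
      rw [smul_eq_mul, pderiv_mul]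
      exact Ideal.add_mem _ (Ideal.mul_mem_left _ _ (hT hx)) (Ideal.mul_mem_left _ _ (hder j))
  apply le_antisymm
  · rw [derivIdeal, Ideal.span_le]
    rintro x (hx | ⟨f, hf, j, rfl⟩)
    · exact hT hx
    · exact pderiv_mem f hf j
  · rw [Ideal.span_le]
    rintro x (hx | ⟨f, hf, j, rfl⟩)
    · exact Ideal.subset_span (Or.inl (Ideal.subset_span hx))
    · exact Ideal.subset_span (Or.inr ⟨f, Ideal.subset_span hf, j, rfl⟩)

theorem derivIdealIter_succ (i : ℕ) (I : Ideal (MvPolynomial σ K)) :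
    derivIdealIter (i + 1) I = derivIdeal (derivIdealIter i I) :=
  Function.iterate_succ_apply' _ _ _

theorem derivIdealIter_span_range {ι : Type*} (g : ι → MvPolynomial σ K) (i : ℕ) :
    derivIdealIter i (Ideal.span (Set.range g)) = Ideal.span (pderivsUpTo g i) := by
  induction i with
  | zero => rw [pderivsUpTo_zero]; rfl
  | succ i ih => rw [derivIdealIter_succ, ih, derivIdeal_span, pderivsUpTo_succ]

end DerivIdeal

/-- If `I = (g_1,…,g_l)` then `D^i(I)` is generated by all partial derivatives of the
`g_j` of order `≤ i`; in particular it admits a generating set of at most `(n+1)^i·l`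
polynomials, each of total degree at most `max_j deg(g_j)`. -/
theorem derivIdealIter_span (K : Type*) [Field K] (n l : ℕ)
    (g : Fin l → MvPolynomial (Fin n) K) (I : Ideal (MvPolynomial (Fin n) K))
    (hI : I = Ideal.span (Set.range g)) (i : ℕ) :
    derivIdealIter i I =
      Ideal.span {p : MvPolynomial (Fin n) K | ∃ j : Fin l, ∃ L : List (Fin n),
        L.length ≤ i ∧ p = L.foldr (fun t q => MvPolynomial.pderiv t q) (g j)} ∧
    ∃ S : Finset (MvPolynomial (Fin n) K),
      S.card ≤ (n + 1) ^ i * l ∧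
      (∀ p ∈ S, p.totalDegree ≤ Finset.univ.sup fun j => (g j).totalDegree) ∧
      Ideal.span (S : Set (MvPolynomial (Fin n) K)) = derivIdealIter i I := by
  classical
  have hspan : derivIdealIter i I = Ideal.span (pderivsUpTo g i) := by
    rw [hI, derivIdealIter_span_range]
  refine ⟨hspan, Finset.univ.image fun p : Fin l × (Fin i → Option (Fin n)) =>
    (List.ofFn p.2).reduceOption.foldr (fun t q => pderiv t q) (g p.1), ?_, ?_, ?_⟩
  · refine Finset.card_image_le.trans (le_of_eq ?_)
    simp [Fintype.card_prod, mul_comm]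
  · simp only [Finset.mem_image, Finset.mem_univ, true_and, forall_exists_index]
    rintro _ ⟨j, f⟩ rfl
    exact (totalDegree_foldr_pderiv_le _ _).trans
      (Finset.le_sup (f := fun j => (g j).totalDegree) (Finset.mem_univ j))
  · rw [hspan, pderivsUpTo_eq_range, Finset.coe_image, Finset.coe_univ, Set.image_univ]
end

section
/- Let K be a field of characteristic zero, let I be an ideal of K[x_1,…,x_n], let μ ≥ 1, and let u ∈ D^{μ−1}(I) (a 'tangent direction'). Then supp(I,μ) ⊆ V(u): every point a ∈ K^n with I ⊆ m_a^μ satisfies u(a) = 0. Moreover, if in addition u has order exactly one at every point of its zero set (i.e., for every a with u(a) = 0 one has u ∉ m_a^2), then at every point a of V(u) some first partial derivative ∂u/∂x_j does not vanish at a, so V(u) is a smooth hypersurface. -/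
open MvPolynomial in
lemma sub_C_eval_mem_maxIdeal {K : Type*} [Field K] {σ : Type*} (a : σ → K)
    (f : MvPolynomial σ K) : f - C (eval a f) ∈ maxIdeal K σ a := by
  induction f using MvPolynomial.induction_on with
  | C r => simp
  | add p q hp hq =>
      have h : p + q - C (eval a (p + q)) =
          (p - C (eval a p)) + (q - C (eval a q)) := by
        rw [map_add, map_add]; ring
      rw [h]; exact add_mem hp hq
  | mul_X p i hp =>
      have h : p * X i - C (eval a (p * X i)) =
          p * (X i - C (a i)) + (p - C (eval a p)) * C (a i) := by
        rw [map_mul, eval_X, map_mul]; ring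
      rw [h]
      refine add_mem (Ideal.mul_mem_left _ _ ?_) (Ideal.mul_mem_right _ _ hp)
      exact Ideal.subset_span ⟨i, rfl⟩

open MvPolynomial in
lemma mem_maxIdeal_iff {K : Type*} [Field K] {σ : Type*} (a : σ → K)
    (f : MvPolynomial σ K) : f ∈ maxIdeal K σ a ↔ eval a f = 0 := by
  constructor
  · intro hf
    have h : maxIdeal K σ a ≤ RingHom.ker (eval a) := by
      rw [maxIdeal, Ideal.span_le]
      rintro _ ⟨i, rfl⟩
      simp [RingHom.mem_ker]
    exact h hf
  · intro hf
    simpa [hf] using sub_C_eval_mem_maxIdeal a f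

open MvPolynomial in
lemma pderiv_mem_pow {K : Type*} [Field K] {σ : Type*} [DecidableEq σ] (a : σ → K) (j : σ) :
    ∀ k : ℕ, ∀ f ∈ maxIdeal K σ a ^ (k + 1), pderiv j f ∈ maxIdeal K σ a ^ k := by
  intro k
  induction k with
  | zero => intro f _; simp [Ideal.one_eq_top]
  | succ k ih =>
      intro f hf
      rw [pow_succ] at hf
      refine Submodule.mul_induction_on hf (fun g hg h hh => ?_)
        (fun x y hx hy => by simpa [map_add] using add_mem hx hy)
      rw [pderiv_mul, pow_succ]
      exact add_mem (Ideal.mul_mem_mul (ih g hg) hh) (Ideal.mul_mem_right _ _ hg)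

open MvPolynomial in
lemma derivIdeal_le_pow {K : Type*} [Field K] {σ : Type*} [DecidableEq σ] (a : σ → K)
    (k : ℕ) (I : Ideal (MvPolynomial σ K)) (h : I ≤ maxIdeal K σ a ^ (k + 1)) :
    derivIdeal I ≤ maxIdeal K σ a ^ k := by
  rw [derivIdeal, Ideal.span_le]
  rintro g (hg | ⟨f, hf, j, rfl⟩)
  · exact Ideal.pow_le_pow_right (Nat.le_succ k) (h hg)
  · exact pderiv_mem_pow a j k f (h hf)

open MvPolynomial in
lemma derivIdealIter_le_pow {K : Type*} [Field K] {σ : Type*} [DecidableEq σ] (a : σ → K) :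
    ∀ (i k : ℕ) (I : Ideal (MvPolynomial σ K)), I ≤ maxIdeal K σ a ^ (i + k) →
      derivIdealIter i I ≤ maxIdeal K σ a ^ k := by
  intro i
  induction i with
  | zero => intro k I h; simpa [derivIdealIter] using h
  | succ i ih =>
      intro k I h
      rw [derivIdealIter, Function.iterate_succ_apply]
      refine ih k (derivIdeal I) ?_
      refine derivIdeal_le_pow a (i + k) I ?_
      have : i + 1 + k = i + k + 1 := by ring
      rwa [this] at h

/-- Giraud's lemma on hypersurfaces of maximal contact (affine content): for a tangent
direction `u ∈ D^{μ-1}(I)` one has `supp(I,μ) ⊆ V(u)`; moreover if `u` has order exactly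
one at every point of `V(u)` then at every point of `V(u)` some first partial derivative
of `u` is nonzero, so `V(u)` is a smooth hypersurface. -/
theorem tangent_direction_maximal_contact (K : Type*) [Field K] [CharZero K]
    (n μ : ℕ) (hμ : 1 ≤ μ) (I : Ideal (MvPolynomial (Fin n) K))
    (u : MvPolynomial (Fin n) K) (hu : u ∈ derivIdealIter (μ - 1) I) :
    (∀ a : Fin n → K, I ≤ maxIdeal K (Fin n) a ^ μ → MvPolynomial.eval a u = 0) ∧
    ((∀ a : Fin n → K, MvPolynomial.eval a u = 0 → u ∉ maxIdeal K (Fin n) a ^ 2) →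
      ∀ a : Fin n → K, MvPolynomial.eval a u = 0 →
        ∃ j : Fin n, MvPolynomial.eval a (MvPolynomial.pderiv j u) ≠ 0) := by
  classical
  constructor
  · intro a hIa
    have h1 : u ∈ maxIdeal K (Fin n) a ^ 1 := by
      refine derivIdealIter_le_pow a (μ - 1) 1 I ?_ hu
      rwa [Nat.sub_add_cancel hμ]
    rw [pow_one, mem_maxIdeal_iff] at h1
    exact h1
  · intro h2 a ha
    by_contra hcon
    push_neg at hcon
    apply h2 a ha
    -- u ∈ maxIdeal, expand as combination
    have hmem : u ∈ maxIdeal K (Fin n) a := (mem_maxIdeal_iff a u).mpr ha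
    rw [maxIdeal] at hmem
    obtain ⟨c, hc⟩ := Submodule.mem_span_range_iff_exists_fun _ |>.mp hmem
    -- each coefficient c j evaluates to 0 at a
    have hcj : ∀ j : Fin n, MvPolynomial.eval a (c j) = 0 := by
      intro j
      have := hcon j
      rw [← hc] at this
      simp only [map_sum, smul_eq_mul, MvPolynomial.pderiv_mul, map_add, map_mul,
        MvPolynomial.eval_sub, MvPolynomial.eval_X, MvPolynomial.eval_C, sub_self,
        mul_zero, zero_add, map_sub, MvPolynomial.pderiv_C, MvPolynomial.pderiv_X] at this
      simpa [Pi.single_apply, apply_ite (MvPolynomial.eval a)] using this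
    -- so u ∈ maxIdeal ^ 2
    rw [← hc, sq]
    refine Submodule.sum_mem _ fun j _ => ?_
    rw [smul_eq_mul]
    exact Ideal.mul_mem_mul ((mem_maxIdeal_iff a (c j)).mpr (hcj j))
      (Ideal.subset_span ⟨j, rfl⟩)
end

section
/- Let K be a field of positive characteristic p, let I be an ideal of K[x_1,…,x_n], and let μ be a natural number with 1 ≤ μ < p. Then for every 0 ≤ i ≤ μ−1 and every point a ∈ K^n, I ⊆ m_a^μ if and only if D^i(I) ⊆ m_a^{μ−i}; that is, supp(I,μ) = supp(D^i(I), μ−i) whenever the multiplicity μ is smaller than the characteristic. -/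
namespace Derivation

variable {R A : Type*} [CommSemiring R] [CommRing A] [Algebra R A] {J : Ideal A}

theorem apply_mem_pow_of_mem_pow_succ (D : Derivation R A A) {k : ℕ} {x : A}
    (hx : x ∈ J ^ (k + 1)) : D x ∈ J ^ k := by
  induction k generalizing x with
  | zero => simp
  | succ k ih =>
    rw [pow_succ'] at hx
    refine Submodule.mul_induction_on hx (fun g hg h hh => ?_) fun x y hx hy => ?_
    · rw [D.leibniz, smul_eq_mul, smul_eq_mul, pow_succ']
      exact add_mem (Ideal.mul_mem_mul hg (ih hh)) (Ideal.mul_mem_right _ _ (pow_succ' J k ▸ hh))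
    · rw [map_add]; exact add_mem hx hy

theorem sub_nsmul_mem_pow_of_sub_mem_sq (E : Derivation R A A)
    (hE : ∀ x ∈ J, E x - x ∈ J ^ 2) {ν : ℕ} {x : A} (hx : x ∈ J ^ (ν + 1)) :
    E x - (ν + 1) • x ∈ J ^ (ν + 2) := by
  induction ν generalizing x with
  | zero => simpa using hE x (by simpa using hx)
  | succ ν ih =>
    rw [pow_succ'] at hx
    refine Submodule.mul_induction_on hx (fun g hg h hh => ?_) fun x y hx hy => ?_
    · have hgh : E (g * h) - (ν + 1 + 1) • (g * h) = g * (E h - (ν + 1) • h) + h * (E g - g) := by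
        rw [E.leibniz, smul_eq_mul, smul_eq_mul, nsmul_eq_mul, nsmul_eq_mul]
        push_cast
        ring
      rw [hgh]
      refine add_mem ?_ ?_
      · exact pow_succ' J (ν + 2) ▸ Ideal.mul_mem_mul hg (ih hh)
      · exact pow_add J (ν + 1) 2 ▸ Ideal.mul_mem_mul hh (hE g hg)
    · rw [map_add, smul_add, add_sub_add_comm]
      exact add_mem hx hy

end Derivation

section Euler

open MvPolynomial

variable {K σ : Type*} [Field K] (a : σ → K)

theorem X_sub_C_mem_maxIdeal (j : σ) : X j - C (a j) ∈ maxIdeal K σ a :=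
  Ideal.subset_span ⟨j, rfl⟩

variable [Fintype σ]

noncomputable def eulerDerivation : Derivation K (MvPolynomial σ K) (MvPolynomial σ K) :=
  ∑ j, (X j - C (a j)) • pderiv j

theorem eulerDerivation_apply (f : MvPolynomial σ K) :
    eulerDerivation a f = ∑ j, (X j - C (a j)) * pderiv j f := by
  simp only [eulerDerivation, ← Derivation.coeFnAddMonoidHom_apply, map_sum, Finset.sum_apply]
  simp only [Derivation.coeFnAddMonoidHom_apply, Derivation.smul_apply, smul_eq_mul]

theorem eulerDerivation_mem_maxIdeal_mul {J : Ideal (MvPolynomial σ K)} {f : MvPolynomial σ K}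
    (hf : ∀ j, pderiv j f ∈ J) : eulerDerivation a f ∈ maxIdeal K σ a * J := by
  rw [eulerDerivation_apply]
  exact Ideal.sum_mem _ fun j _ => Ideal.mul_mem_mul (X_sub_C_mem_maxIdeal a j) (hf j)

theorem eulerDerivation_mem_maxIdeal (f : MvPolynomial σ K) :
    eulerDerivation a f ∈ maxIdeal K σ a := by
  simpa using eulerDerivation_mem_maxIdeal_mul a (J := ⊤) fun j => Submodule.mem_top

theorem eulerDerivation_sub_mem_maxIdeal_sq {x : MvPolynomial σ K} (hx : x ∈ maxIdeal K σ a) :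
    eulerDerivation a x - x ∈ maxIdeal K σ a ^ 2 := by
  classical
  induction hx using Submodule.span_induction with
  | mem _ hx =>
    obtain ⟨j, rfl⟩ := hx
    simp [eulerDerivation_apply, pderiv_X, Pi.single_apply]
  | zero => simp
  | add x y _ _ hx hy =>
    rw [map_add, add_sub_add_comm]
    exact add_mem hx hy
  | smul r x hx ih =>
    have hrx : eulerDerivation a (r * x) - r * x
        = r * (eulerDerivation a x - x) + x * eulerDerivation a r := by
      rw [Derivation.leibniz, smul_eq_mul, smul_eq_mul]
      ring
    rw [smul_eq_mul, hrx]
    refine add_mem (Ideal.mul_mem_left _ _ ih) ?_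
    exact sq (maxIdeal K σ a) ▸ Ideal.mul_mem_mul hx (eulerDerivation_mem_maxIdeal a r)

theorem mem_pow_succ_of_pderiv_mem {ν : ℕ} (hν : (ν : K) ≠ 0) {f : MvPolynomial σ K}
    (hf : f ∈ maxIdeal K σ a ^ ν) (hdf : ∀ j, pderiv j f ∈ maxIdeal K σ a ^ ν) :
    f ∈ maxIdeal K σ a ^ (ν + 1) := by
  obtain ⟨ν, rfl⟩ := Nat.exists_eq_succ_of_ne_zero fun h0 : ν = 0 => hν (h0 ▸ Nat.cast_zero)
  have hE : eulerDerivation a f ∈ maxIdeal K σ a ^ (ν + 2) :=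
    pow_succ' (maxIdeal K σ a) (ν + 1) ▸ eulerDerivation_mem_maxIdeal_mul a hdf
  have hEuler := (eulerDerivation a).sub_nsmul_mem_pow_of_sub_mem_sq
    (fun x hx => eulerDerivation_sub_mem_maxIdeal_sq a hx) hf
  have hνf := sub_mem hE hEuler
  rw [sub_sub_cancel, nsmul_eq_mul, ← map_natCast C] at hνf
  exact (Ideal.unit_mul_mem_iff_mem _ ((isUnit_iff_ne_zero.mpr hν).map C)).mp hνf

end Euler

section DerivIdeal

open MvPolynomial

variable {K σ : Type*} [Field K]

theorem derivIdeal_le_iff {I J : Ideal (MvPolynomial σ K)} :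
    derivIdeal I ≤ J ↔ I ≤ J ∧ ∀ f ∈ I, ∀ j, pderiv j f ∈ J := by
  rw [derivIdeal, Ideal.span_le, Set.union_subset_iff]
  refine and_congr Iff.rfl ⟨fun h f hf j => h ⟨f, hf, j, rfl⟩, ?_⟩
  rintro h _ ⟨f, hf, j, rfl⟩
  exact h f hf j

variable [Fintype σ] (a : σ → K)

theorem derivIdeal_le_pow_iff {ν : ℕ} (hν : (ν : K) ≠ 0) (I : Ideal (MvPolynomial σ K)) :
    derivIdeal I ≤ maxIdeal K σ a ^ ν ↔ I ≤ maxIdeal K σ a ^ (ν + 1) := by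
  rw [derivIdeal_le_iff]
  constructor
  · rintro ⟨hI, hdI⟩ f hf
    exact mem_pow_succ_of_pderiv_mem a hν (hI hf) (hdI f hf)
  · intro hI
    exact ⟨hI.trans (Ideal.pow_le_pow_right ν.le_succ),
      fun f hf j => (pderiv j).apply_mem_pow_of_mem_pow_succ (hI hf)⟩

theorem derivIdealIter_le_pow_iff (p : ℕ) [CharP K p] {ν i : ℕ} (hν : 0 < ν) (hνi : ν + i ≤ p)
    (I : Ideal (MvPolynomial σ K)) :
    derivIdealIter i I ≤ maxIdeal K σ a ^ ν ↔ I ≤ maxIdeal K σ a ^ (ν + i) := by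
  induction i generalizing I with
  | zero => rfl
  | succ i ih =>
    have hcast : ((ν + i : ℕ) : K) ≠ 0 := by
      rw [Ne, CharP.cast_eq_zero_iff K p]
      exact Nat.not_dvd_of_pos_of_lt (by omega) (by omega)
    change derivIdealIter i (derivIdeal I) ≤ _ ↔ _
    rw [ih (by omega), derivIdeal_le_pow_iff a hcast, add_assoc]

end DerivIdeal

theorem supp_derivIdealIter_charP_general (K : Type*) [Field K] (p : ℕ) [CharP K p]
    (n : ℕ) (I : Ideal (MvPolynomial (Fin n) K)) (μ i : ℕ)
    (hμ : 1 ≤ μ) (hμp : μ < p) (hi : i ≤ μ - 1) (a : Fin n → K) :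
    I ≤ maxIdeal K (Fin n) a ^ μ ↔
      derivIdealIter i I ≤ maxIdeal K (Fin n) a ^ (μ - i) := by
  rw [derivIdealIter_le_pow_iff a p (by omega) (by omega), Nat.sub_add_cancel (by omega)]

/-- Positive-characteristic variant of the Giraud–Villamayor lemma: over a field of
characteristic `p > 0`, if `1 ≤ μ < p` and `i ≤ μ - 1`, then
`supp(I,μ) = supp(D^i(I), μ-i)`, i.e. `I ⊆ m_a^μ ↔ D^i(I) ⊆ m_a^{μ-i}` for every `a`. -/
theorem supp_derivIdealIter_charP (K : Type*) [Field K] (p : ℕ) [CharP K p]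
    (hp : 0 < p) (n : ℕ) (I : Ideal (MvPolynomial (Fin n) K)) (μ i : ℕ)
    (hμ : 1 ≤ μ) (hμp : μ < p) (hi : i ≤ μ - 1) (a : Fin n → K) :
    I ≤ maxIdeal K (Fin n) a ^ μ ↔
      derivIdealIter i I ≤ maxIdeal K (Fin n) a ^ (μ - i) :=
  supp_derivIdealIter_charP_general K p n I μ i hμ hμp hi a
end
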